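/- arXiv:2309.04028 — 6 statements merged into one kernel-verified Lean document; each statement's English description precedes it below -/
import Mathlib

section
/- Let q₁,…,qₙ ∈ ℂ⁴ be such that every subset of at most four of them is linearly independent, and let p₁,…,pₙ ∈ ℂ³ all be nonzero. If the focal matrix M(q,p) has a nontrivial kernel, then there exist a sequence of 3×4 complex matrices A⁽ᵏ⁾ (k ∈ ℕ) and nonzero scalars μ_j^{(k)} ∈ ℂ such that for every j = 1,…,n, the vectors μ_j^{(k)}·(A⁽ᵏ⁾·q_j) converge to p_j in ℂ³ as k → ∞. In other words, every tuple (p₁,…,pₙ) satisfying the focal rank constraint lies in the Euclidean closure of the set of tuples of (projective) images of q₁,…,qₙ under a single pinhole camera. -/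
/-! A kernel vector of `M(q,p)` is a camera `A` together with depths `λ_j` such that
`A q_j = -λ_j p_j`. It forces `A ≠ 0`, so `A` kills at most three of the `q_j`, since any four of
them span `ℂ⁴`; on these independent `q_j` pick `B` with `B q_j = p_j`. The cameras `A + t B`
with `t → 0` then do the job: rescale the image of `q_j` by `-λ_j⁻¹` when `λ_j ≠ 0`, giving
`p_j + O(t)`, and by `t⁻¹` when `λ_j = 0`, giving exactly `p_j`. -/

open Matrix Filter Topology

/-- For `q ∈ ℂ⁴`, the 3×12 matrix `Q(q) = I₃ ⊗ qᵀ`. -/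
def Qmat (q : Fin 4 → ℂ) : Matrix (Fin 3) (Fin 3 × Fin 4) ℂ :=
  Matrix.of fun i jk => if jk.1 = i then q jk.2 else 0

/-- The `3n × (12 + n)` focal matrix `M(q,p)`. -/
def focalMatrix (n : ℕ) (q : Fin n → Fin 4 → ℂ) (p : Fin n → Fin 3 → ℂ) :
    Matrix (Fin n × Fin 3) ((Fin 3 × Fin 4) ⊕ Fin n) ℂ :=
  Matrix.of fun ji =>
    Sum.elim (fun ck => if ck.1 = ji.2 then q ji.1 ck.2 else 0)
             (fun j' => if j' = ji.1 then p ji.1 ji.2 else 0)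

theorem LinearIndependent.exists_linearMap_apply_eq {K V W ι : Type*} [Field K]
    [AddCommGroup V] [Module K V] [AddCommGroup W] [Module K W]
    {v : ι → V} (hv : LinearIndependent K v) (w : ι → W) :
    ∃ f : V →ₗ[K] W, ∀ i, f (v i) = w i := by
  obtain ⟨f, hf⟩ := LinearMap.exists_extend ((Module.Basis.span hv).constr K w)
  refine ⟨f, fun i => ?_⟩
  have h := congr($hf (Module.Basis.span hv i))
  rwa [LinearMap.comp_apply, Module.Basis.constr_basis, Module.Basis.span_apply] at h

theorem exists_seq_ne_zero_tendsto_zero (𝕜 : Type*) [NontriviallyNormedField 𝕜] :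
    ∃ t : ℕ → 𝕜, (∀ k, t k ≠ 0) ∧ Tendsto t atTop (𝓝 0) := by
  obtain ⟨x, hx0, hx1⟩ := NormedField.exists_norm_lt_one 𝕜
  exact ⟨(x ^ ·), fun k => pow_ne_zero k (norm_pos_iff.mp hx0),
    tendsto_pow_atTop_nhds_zero_of_norm_lt_one hx1⟩

theorem card_filter_apply_eq_zero_lt_finrank {K V W ι : Type*} [DivisionRing K]
    [AddCommGroup V] [Module K V] [FiniteDimensional K V] [AddCommGroup W] [Module K W]
    [Fintype ι] {f : V →ₗ[K] W} (hf : f ≠ 0) {q : ι → V}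
    (hq : ∀ s : Finset ι, s.card = Module.finrank K V → LinearIndependent K (fun j : s => q j))
    [DecidablePred fun j => f (q j) = 0] :
    (Finset.univ.filter fun j => f (q j) = 0).card < Module.finrank K V := by
  by_contra! hcard
  obtain ⟨s, hs, hs_card⟩ := Finset.exists_subset_card_eq hcard
  have hspan : Submodule.span K (Set.range fun j : s => q j) = ⊤ :=
    (hq s hs_card).span_eq_top_of_card_eq_finrank' (by simpa using hs_card)
  apply hf
  refine LinearMap.ext_on_range hspan fun j => ?_
  simpa using (Finset.mem_filter.mp (hs j.2)).2

theorem exists_tendsto_smul_mulVec {𝕜 m l ι : Type*} [NontriviallyNormedField 𝕜] [Fintype l]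
    {A B : Matrix m l 𝕜} {q : ι → l → 𝕜} {p : ι → m → 𝕜} {c : ι → 𝕜}
    (hA : ∀ j, A *ᵥ q j = c j • p j) (hB : ∀ j, c j = 0 → B *ᵥ q j = p j) :
    ∃ (A' : ℕ → Matrix m l 𝕜) (μ : ℕ → ι → 𝕜), (∀ k j, μ k j ≠ 0) ∧
      ∀ j, Tendsto (fun k => μ k j • A' k *ᵥ q j) atTop (𝓝 (p j)) := by
  classical
  obtain ⟨t, ht0, ht⟩ := exists_seq_ne_zero_tendsto_zero 𝕜
  refine ⟨fun k => A + t k • B, fun k j => if c j = 0 then (t k)⁻¹ else (c j)⁻¹,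
    fun k j => ?_, fun j => ?_⟩
  · beta_reduce
    split_ifs with hc
    · exact inv_ne_zero (ht0 k)
    · exact inv_ne_zero hc
  by_cases hc : c j = 0
  · have h (k : ℕ) : (t k)⁻¹ • (A + t k • B) *ᵥ q j = p j := by
      rw [add_mulVec, smul_mulVec, hA, hc, hB j hc, zero_smul, zero_add, inv_smul_smul₀ (ht0 k)]
    simp [hc, h]
  · have h (k : ℕ) :
        (c j)⁻¹ • (A + t k • B) *ᵥ q j = p j + ((c j)⁻¹ * t k) • B *ᵥ q j := by
      rw [add_mulVec, smul_mulVec, hA, smul_add, inv_smul_smul₀ hc, smul_smul]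
    have hlim : Tendsto (fun k => p j + ((c j)⁻¹ * t k) • B *ᵥ q j) atTop (𝓝 (p j)) := by
      simpa using tendsto_const_nhds.add ((ht.const_mul (c j)⁻¹).smul_const (B *ᵥ q j))
    simpa [hc, h] using hlim

section Focal

variable {n : ℕ} {q : Fin n → Fin 4 → ℂ} {p : Fin n → Fin 3 → ℂ}
  {v : (Fin 3 × Fin 4) ⊕ Fin n → ℂ}

def cameraPart (v : (Fin 3 × Fin 4) ⊕ Fin n → ℂ) : Matrix (Fin 3) (Fin 4) ℂ :=
  of fun i k => v (.inl (i, k))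

theorem focalMatrix_mulVec_apply (j : Fin n) (i : Fin 3) :
    (focalMatrix n q p *ᵥ v) (j, i) = (cameraPart v *ᵥ q j) i + v (.inr j) * p j i := by
  simp [focalMatrix, cameraPart, mulVec, dotProduct, Fintype.sum_prod_type, mul_comm]

theorem focalMatrix_mulVec_eq_zero_iff :
    focalMatrix n q p *ᵥ v = 0 ↔ ∀ j, cameraPart v *ᵥ q j = -v (.inr j) • p j := by
  simp only [funext_iff, Prod.forall, focalMatrix_mulVec_apply, Pi.zero_apply, Pi.smul_apply,
    smul_eq_mul, add_eq_zero_iff_eq_neg, neg_mul]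

theorem cameraPart_ne_zero (hp : ∀ j, p j ≠ 0) (hv0 : v ≠ 0)
    (hv : focalMatrix n q p *ᵥ v = 0) :
    cameraPart v ≠ 0 := by
  intro hA
  have hdepth (j : Fin n) : v (.inr j) = 0 := by
    have h := focalMatrix_mulVec_eq_zero_iff.mp hv j
    rw [hA, zero_mulVec, eq_comm, smul_eq_zero, neg_eq_zero] at h
    exact h.resolve_right (hp j)
  refine hv0 (funext ?_)
  rintro (⟨i, k⟩ | j)
  · exact congr($hA i k)
  · exact hdepth j

end Focal

/-- If every subset of at most four of the `q_j` is linearly independent, all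
`p_j` are nonzero, and the focal matrix `M(q,p)` has a nontrivial kernel, then
there are cameras `A⁽ᵏ⁾` and nonzero scalars `μ_j^{(k)}` with
`μ_j^{(k)} • (A⁽ᵏ⁾ q_j) → p_j` for every `j`: every tuple satisfying the focal
rank constraint lies in the closure of the set of image tuples of one camera. -/
theorem focal_kernel_implies_closure (n : ℕ)
    (q : Fin n → Fin 4 → ℂ) (p : Fin n → Fin 3 → ℂ)
    (hq : ∀ s : Finset (Fin n), s.card ≤ 4 →
      LinearIndependent ℂ (fun j : s => q j))
    (hp : ∀ j, p j ≠ 0)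
    (hker : ∃ v : ((Fin 3 × Fin 4) ⊕ Fin n) → ℂ, v ≠ 0 ∧
      (focalMatrix n q p).mulVec v = 0) :
    ∃ (A : ℕ → Matrix (Fin 3) (Fin 4) ℂ) (μ : ℕ → Fin n → ℂ),
      (∀ k j, μ k j ≠ 0) ∧
      ∀ j, Tendsto (fun k => μ k j • (A k).mulVec (q j)) atTop (𝓝 (p j)) := by
  obtain ⟨v, hv0, hv⟩ := hker
  have hA : ∀ j, cameraPart v *ᵥ q j = -v (.inr j) • p j :=
    focalMatrix_mulVec_eq_zero_iff.mp hv
  have hA0 : toLin' (cameraPart v) ≠ 0 :=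
    toLin'.map_ne_zero_iff.mpr (cameraPart_ne_zero hp hv0 hv)
  have hS_card : (Finset.univ.filter fun j => cameraPart v *ᵥ q j = 0).card < 4 := by
    have h := card_filter_apply_eq_zero_lt_finrank hA0 fun s hs =>
      hq s (hs.trans (Module.finrank_fin_fun ℂ)).le
    -- `toLin' A x` unfolds to `A *ᵥ x`, so `h` is the claim up to the value of the rank
    rwa [Module.finrank_fin_fun] at h
  obtain ⟨f, hf⟩ := (hq _ hS_card.le).exists_linearMap_apply_eq fun j => p j
  refine exists_tendsto_smul_mulVec hA (B := LinearMap.toMatrix' f) fun j hj => ?_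
  rw [LinearMap.toMatrix'_mulVec]
  exact hf ⟨j, (Finset.mem_filter_univ j).mpr (by rw [hA, hj, zero_smul])⟩
end

section
/- For a = (a₁,a₂,a₃,a₄) ∈ ℂ⁴, the reduced camera matrix A(a) has rank 3 if and only if at most one of the coordinates a₁, a₂, a₃, a₄ is zero. -/
open Matrix

/-- The reduced camera matrix `A(a)`. -/
def Ared (a : Fin 4 → ℂ) : Matrix (Fin 3) (Fin 4) ℂ :=
  !![a 0, 0, 0, a 3;
     0, a 1, 0, a 3;
     0, 0, a 2, a 3]

/-!
`A(a) = A(1) * diagonal a`, so the rank of `A(a)` is at most the number of nonzero coordinates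
of `a`. Conversely, the columns `e₁, e₂, e₃, e₁ + e₂ + e₃` of `A(1)` are in general position:
any three of them are independent. Hence if every coordinate except possibly the `k`-th is
nonzero, the `3 × 3` minor of `A(a)` omitting column `k` is nonzero.
-/

theorem Matrix.submatrix_mul_diagonal {l m n o R : Type*} [Fintype n] [Fintype o]
    [DecidableEq n] [DecidableEq o] [NonUnitalNonAssocSemiring R]
    (A : Matrix m n R) (d : n → R) (r : l → m) (c : o → n) :
    (A * diagonal d).submatrix r c = A.submatrix r c * diagonal (d ∘ c) := by
  ext i j
  simp

theorem Ared_eq_mul_diagonal (a : Fin 4 → ℂ) : Ared a = Ared 1 * diagonal a := by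
  ext i j
  fin_cases i <;> fin_cases j <;> simp [Ared]

theorem rank_Ared_le_ncard_ne_zero (a : Fin 4 → ℂ) : (Ared a).rank ≤ {i | a i ≠ 0}.ncard := by
  classical
  rw [Ared_eq_mul_diagonal, Set.ncard_eq_toFinset_card', Set.toFinset_ofPred,
    ← Fintype.card_subtype, ← rank_diagonal]
  exact rank_mul_le_right _ _

theorem det_submatrix_Ared_one_succAbove_ne_zero (k : Fin 4) :
    ((Ared 1).submatrix id k.succAbove).det ≠ 0 := by
  fin_cases k <;> simp [Ared, det_fin_three, Fin.succAbove]

theorem rank_Ared_eq_three_of_ne_zero_of_ne (a : Fin 4 → ℂ) (k : Fin 4)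
    (ha : ∀ j, j ≠ k → a j ≠ 0) : (Ared a).rank = 3 := by
  have hdet : ((Ared a).submatrix id k.succAbove).det ≠ 0 := by
    rw [Ared_eq_mul_diagonal, submatrix_mul_diagonal, det_mul, det_diagonal]
    exact mul_ne_zero (det_submatrix_Ared_one_succAbove_ne_zero k)
      (Finset.prod_ne_zero_iff.2 fun j _ => ha _ (Fin.succAbove_ne k j))
  refine le_antisymm (rank_le_height _) ?_
  simpa [rank_of_det_ne_zero hdet] using rank_submatrix_le (Ared a) id k.succAbove

/-- For `a ∈ ℂ⁴`, the reduced camera matrix `A(a)` has rank 3 if and only if at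
most one of the coordinates of `a` is zero. -/
theorem Ared_rank_eq_three_iff (a : Fin 4 → ℂ) :
    (Ared a).rank = 3 ↔ Set.ncard {i : Fin 4 | a i = 0} ≤ 1 := by
  constructor
  · intro hrank
    have hle := rank_Ared_le_ncard_ne_zero a
    have hcard := Set.ncard_add_ncard_compl {i : Fin 4 | a i = 0}
    simp only [Set.compl_ofPred, Nat.card_eq_fintype_card, Fintype.card_fin, ← ne_eq] at hcard
    omega
  · intro hzero
    obtain ⟨k, hk⟩ := (Set.ncard_le_one_iff_subset_singleton (Set.toFinite _)).1 hzero
    exact rank_Ared_eq_three_of_ne_zero_of_ne a k fun j hjk hj => hjk (hk hj)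
end

section
/- For every a = (a₁,a₂,a₃,a₄) ∈ ℂ⁴, the vector κ(a) = (a₂a₃a₄, a₁a₃a₄, a₁a₂a₄, −a₁a₂a₃) satisfies A(a)·κ(a) = 0. Moreover, if at most one of the coordinates of a is zero, then κ(a) ≠ 0 and the kernel of the linear map ℂ⁴ → ℂ³ given by A(a) is exactly the one-dimensional span of κ(a); that is, the center of the reduced camera A(a) is the Cremona image of a. -/
/-!
If `A(a) x = 0` then `aᵢ xᵢ = -a₄ x₄` for `i ≤ 3`, and these relations make every `2 × 2`
minor `xᵢ κⱼ - xⱼ κᵢ` vanish, so `x` is parallel to `κ(a)`. Since `κᵢ(a)` is, up to sign, the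
product of the coordinates of `a` other than `aᵢ`, some `κᵢ(a)` is nonzero as soon as at most one
coordinate of `a` vanishes, and then the kernel is exactly the line spanned by `κ(a)`.
-/

open Matrix

/-- A homogeneous representative `κ(a) = (a₂a₃a₄, a₁a₃a₄, a₁a₂a₄, −a₁a₂a₃)` of the
Cremona image of `a`. -/
def kvec (a : Fin 4 → ℂ) : Fin 4 → ℂ :=
  ![a 1 * a 2 * a 3, a 0 * a 2 * a 3, a 0 * a 1 * a 3, -(a 0 * a 1 * a 2)]

theorem Submodule.mem_span_singleton_of_mul_eq_mul {K ι : Type*} [Field K] {v x : ι → K} {j : ι}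
    (hj : v j ≠ 0) (h : ∀ i, x i * v j = x j * v i) : x ∈ Submodule.span K {v} := by
  refine Submodule.mem_span_singleton.2 ⟨x j / v j, funext fun i => ?_⟩
  rw [Pi.smul_apply, smul_eq_mul, div_mul_eq_mul_div, div_eq_iff hj, h i]

theorem exists_forall_ne_imp_ne_zero_of_ncard_le_one {ι M : Type*} [Finite ι] [Nonempty ι]
    [Zero M] {f : ι → M} (h : {i | f i = 0}.ncard ≤ 1) : ∃ i, ∀ j ≠ i, f j ≠ 0 := by
  by_cases hzero : ∃ i, f i = 0
  · obtain ⟨i, hi⟩ := hzero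
    exact ⟨i, fun j hji hj => hji ((Set.ncard_le_one (Set.toFinite _)).1 h j hj i hi)⟩
  · exact ⟨Classical.arbitrary ι, fun j _ hj => hzero ⟨j, hj⟩⟩

theorem Ared_mulVec (a x : Fin 4 → ℂ) :
    Ared a *ᵥ x = ![a 0 * x 0 + a 3 * x 3, a 1 * x 1 + a 3 * x 3, a 2 * x 2 + a 3 * x 3] := by
  ext i
  fin_cases i <;> simp [Ared, mulVec, dotProduct, Fin.sum_univ_four]

theorem Ared_mulVec_kvec (a : Fin 4 → ℂ) : Ared a *ᵥ kvec a = 0 := by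
  rw [Ared_mulVec]
  ext i
  fin_cases i <;> simp [kvec] <;> ring

theorem mul_kvec_eq_of_Ared_mulVec_eq_zero {a x : Fin 4 → ℂ} (hx : Ared a *ᵥ x = 0) (i j : Fin 4) :
    x i * kvec a j = x j * kvec a i := by
  rw [Ared_mulVec] at hx
  have e0 : a 0 * x 0 + a 3 * x 3 = 0 := congrFun hx 0
  have e1 : a 1 * x 1 + a 3 * x 3 = 0 := congrFun hx 1
  have e2 : a 2 * x 2 + a 3 * x 3 = 0 := congrFun hx 2
  fin_cases i <;> fin_cases j <;> simp [kvec] <;> grind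

theorem kvec_apply_ne_zero {a : Fin 4 → ℂ} {i : Fin 4} (ha : ∀ j ≠ i, a j ≠ 0) : kvec a i ≠ 0 := by
  fin_cases i <;> simp [kvec, ha]

theorem ker_Ared_eq_span_kvec {a : Fin 4 → ℂ} {j : Fin 4} (hj : kvec a j ≠ 0) :
    LinearMap.ker (Ared a).mulVecLin = Submodule.span ℂ {kvec a} :=
  le_antisymm
    (fun _ hx => Submodule.mem_span_singleton_of_mul_eq_mul hj fun i =>
      mul_kvec_eq_of_Ared_mulVec_eq_zero hx i j)
    (Submodule.span_singleton_le_iff_mem _ _ |>.2 (Ared_mulVec_kvec a))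

/-- `A(a)·κ(a) = 0` always; and if at most one coordinate of `a` is zero then
`κ(a) ≠ 0` and the kernel of `A(a)` is exactly the span of `κ(a)`: the center of
the reduced camera `A(a)` is the Cremona image of `a`. -/
theorem center_of_reduced_camera (a : Fin 4 → ℂ) :
    (Ared a).mulVec (kvec a) = 0 ∧
    (Set.ncard {i : Fin 4 | a i = 0} ≤ 1 →
      kvec a ≠ 0 ∧
      LinearMap.ker (Ared a).mulVecLin = Submodule.span ℂ {kvec a}) := by
  refine ⟨Ared_mulVec_kvec a, fun h => ?_⟩
  obtain ⟨i, hi⟩ := exists_forall_ne_imp_ne_zero_of_ncard_le_one h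
  have hκ : kvec a i ≠ 0 := kvec_apply_ne_zero hi
  exact ⟨fun h0 => hκ (congrFun h0 i), ker_Ared_eq_span_kvec hκ⟩
end

section
/- There exists a sign ε ∈ {1, −1}, independent of the data, such that for all q₁, q₂ ∈ ℂ⁴ and p₁, p₂ ∈ ℂ³, the determinant of the 6×6 matrix [A(q₁), p₁, 0; A(q₂), 0, p₂] equals ε·p₁ᵀ·F(q₁,q₂)·p₂, where F(q₁,q₂) is the 3×3 dual fundamental matrix with entries: F₁₁ = F₂₂ = F₃₃ = 0; F₁₂ = q₁[2]q₂[1](q₁[4]q₂[3] − q₁[3]q₂[4]); F₁₃ = q₁[3]q₂[1](q₁[2]q₂[4] − q₁[4]q₂[2]); F₂₁ = q₁[1]q₂[2](q₁[3]q₂[4] − q₁[4]q₂[3]); F₂₃ = q₁[3]q₂[2](q₁[4]q₂[1] − q₁[1]q₂[4]); F₃₁ = q₁[1]q₂[3](q₁[4]q₂[2] − q₁[2]q₂[4]); F₃₂ = q₁[2]q₂[3](q₁[1]q₂[4] − q₁[4]q₂[1]). -/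
open Matrix

/-- The 6×6 matrix `[A(q₁), p₁, 0; A(q₂), 0, p₂]`. -/
def sixMat (q1 q2 : Fin 4 → ℂ) (p1 p2 : Fin 3 → ℂ) : Matrix (Fin 6) (Fin 6) ℂ :=
  !![q1 0, 0, 0, q1 3, p1 0, 0;
     0, q1 1, 0, q1 3, p1 1, 0;
     0, 0, q1 2, q1 3, p1 2, 0;
     q2 0, 0, 0, q2 3, 0, p2 0;
     0, q2 1, 0, q2 3, 0, p2 1;
     0, 0, q2 2, q2 3, 0, p2 2]

/-- Carlsson and Weinshall's 3×3 dual fundamental matrix `F(q₁,q₂)`. -/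
def dualFund (q1 q2 : Fin 4 → ℂ) : Matrix (Fin 3) (Fin 3) ℂ :=
  !![0,
     q1 1 * q2 0 * (q1 3 * q2 2 - q1 2 * q2 3),
     q1 2 * q2 0 * (q1 1 * q2 3 - q1 3 * q2 1);
     q1 0 * q2 1 * (q1 2 * q2 3 - q1 3 * q2 2),
     0,
     q1 2 * q2 1 * (q1 3 * q2 0 - q1 0 * q2 3);
     q1 0 * q2 2 * (q1 3 * q2 1 - q1 1 * q2 3),
     q1 1 * q2 2 * (q1 0 * q2 3 - q1 3 * q2 0),
     0]

/-!
Expanding the determinant along the `p₁`-column and then the `p₂`-column writes it as a bilinear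
form in `(p₁, p₂)`: the coefficient of `p₁ i * p₂ j` is `(-1)^(i+j)` times the 4×4 minor of the
stacked cameras `[A; B]` with row `i` of `A` and row `j` of `B` deleted. For reduced cameras these
signed minors are exactly the entries of the dual fundamental matrix, so `ε = 1`.
-/

section Bifocal

variable {R : Type*} [CommRing R] (A B : Matrix (Fin 3) (Fin 4) R)

def bifocalMatrix (p r : Fin 3 → R) : Matrix (Fin 6) (Fin 6) R :=
  !![A 0 0, A 0 1, A 0 2, A 0 3, p 0, 0;
     A 1 0, A 1 1, A 1 2, A 1 3, p 1, 0;
     A 2 0, A 2 1, A 2 2, A 2 3, p 2, 0;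
     B 0 0, B 0 1, B 0 2, B 0 3, 0, r 0;
     B 1 0, B 1 1, B 1 2, B 1 3, 0, r 1;
     B 2 0, B 2 1, B 2 2, B 2 3, 0, r 2]

def bifocalMinor (i j : Fin 3) : Matrix (Fin 4) (Fin 4) R :=
  of ![A (i.succAbove 0), A (i.succAbove 1), B (j.succAbove 0), B (j.succAbove 1)]

def bifocalForm : Matrix (Fin 3) (Fin 3) R :=
  of fun i j => (-1) ^ (i + j : ℕ) * (bifocalMinor A B i j).det

theorem bifocalMatrix_submatrix_submatrix (p r : Fin 3 → R) (i j : Fin 3) :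
    ((bifocalMatrix A B p r).submatrix (Fin.castAdd 3 i).succAbove (Fin.succAbove 4)).submatrix
      (Fin.natAdd 2 j).succAbove (Fin.succAbove 4) = bifocalMinor A B i j := by
  fin_cases i <;> fin_cases j <;> ext a b <;> fin_cases a <;> fin_cases b <;> rfl

theorem det_bifocalMatrix_submatrix (p r : Fin 3 → R) (i : Fin 3) :
    ((bifocalMatrix A B p r).submatrix (Fin.castAdd 3 i).succAbove (Fin.succAbove 4)).det =
      ∑ j : Fin 3, (-1) ^ (j : ℕ) * r j * (bifocalMinor A B i j).det := by
  let M : Matrix (Fin 5) (Fin 5) R :=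
    (bifocalMatrix A B p r).submatrix (Fin.castAdd 3 i).succAbove (Fin.succAbove 4)
  have hA : ∀ k : Fin 2, M (Fin.castAdd 3 k) 4 = 0 := by
    fin_cases i <;> intro k <;> fin_cases k <;> rfl
  have hB : ∀ j : Fin 3, M (Fin.natAdd 2 j) 4 = r j := by
    fin_cases i <;> intro j <;> fin_cases j <;> rfl
  rw [det_succ_column M 4, Fin.sum_univ_add (a := 2) (b := 3)]
  simp only [hA, hB, mul_zero, zero_mul, Finset.sum_const_zero, zero_add, M,
    bifocalMatrix_submatrix_submatrix]
  refine Finset.sum_congr rfl fun j _ => ?_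
  rw [Fin.val_natAdd, show ((4 : Fin 5) : ℕ) = 4 from rfl]
  ring

theorem det_bifocalMatrix (p r : Fin 3 → R) :
    (bifocalMatrix A B p r).det = p ⬝ᵥ bifocalForm A B *ᵥ r := by
  have hA : ∀ i : Fin 3, bifocalMatrix A B p r (Fin.castAdd 3 i) 4 = p i := by
    intro i; fin_cases i <;> rfl
  have hB : ∀ j : Fin 3, bifocalMatrix A B p r (Fin.natAdd 3 j) 4 = 0 := by
    intro j; fin_cases j <;> rfl
  rw [det_succ_column _ 4, Fin.sum_univ_add (a := 3) (b := 3)]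
  simp only [hA, hB, mul_zero, zero_mul, Finset.sum_const_zero, add_zero,
    det_bifocalMatrix_submatrix, dotProduct, mulVec, bifocalForm, of_apply, Finset.mul_sum]
  refine Finset.sum_congr rfl fun i _ => Finset.sum_congr rfl fun j _ => ?_
  rw [Fin.val_castAdd, show ((4 : Fin 6) : ℕ) = 4 from rfl]
  ring

end Bifocal

theorem sixMat_eq_bifocalMatrix (q1 q2 : Fin 4 → ℂ) (p1 p2 : Fin 3 → ℂ) :
    sixMat q1 q2 p1 p2 = bifocalMatrix (Ared q1) (Ared q2) p1 p2 := by
  ext i j; fin_cases i <;> fin_cases j <;> rfl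

theorem bifocalForm_Ared (q1 q2 : Fin 4 → ℂ) :
    bifocalForm (Ared q1) (Ared q2) = dualFund q1 q2 := by
  ext i j
  fin_cases i <;> fin_cases j <;>
    simp +decide [bifocalForm, bifocalMinor, Ared, dualFund,
      det_succ_row_zero, Fin.sum_univ_succ, Fin.succAbove] <;> ring

/-- There is a sign `ε ∈ {1, −1}`, independent of the data, such that for all
`q₁, q₂ ∈ ℂ⁴` and `p₁, p₂ ∈ ℂ³`,
`det [A(q₁), p₁, 0; A(q₂), 0, p₂] = ε · p₁ᵀ · F(q₁,q₂) · p₂`. -/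
theorem reduced_two_focal_eq_dual_fundamental :
    ∃ ε : ℂ, (ε = 1 ∨ ε = -1) ∧
      ∀ (q1 q2 : Fin 4 → ℂ) (p1 p2 : Fin 3 → ℂ),
        (sixMat q1 q2 p1 p2).det = ε * (p1 ⬝ᵥ (dualFund q1 q2).mulVec p2) := by
  refine ⟨1, Or.inl rfl, fun q1 q2 p1 p2 => ?_⟩
  rw [sixMat_eq_bifocalMatrix, det_bifocalMatrix, bifocalForm_Ared, one_mul]
end

section
/- For all q₁,…,q₆ ∈ ℂ⁴, p₁,…,p₆ ∈ ℂ³ and all scalars c₁,…,c₆, c₁′,…,c₆′ ∈ ℂ, the determinant of the 18×18 focal matrix satisfies det M(c₁q₁,…,c₆q₆; c₁′p₁,…,c₆′p₆) = (∏_{j=1}^{6} c_j²·c_j′) · det M(q₁,…,q₆; p₁,…,p₆). In particular, the 6-focal determinant is multihomogeneous of degree 2 in each q_j and degree 1 in each p_j, so its vanishing defines a well-defined multiprojective hypersurface. -/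
/-!
Scaling the three rows of block `j` by `c_j` and the column of `p_j` by `c'_j / c_j` turns
`M(q, p)` into `M(cq, c'p)`, so for nonzero `c_j` the determinant picks up the factor
`∏ c_j³ · ∏ c'_j / c_j = ∏ c_j² c'_j`. Both sides are polynomial, hence continuous, in `c`, and
the `c` with all `c_j ≠ 0` are dense.
-/

open Matrix

/-- Natural ordering of the 18 rows of the `n = 6` focal matrix. -/
def rowIdx : Fin 18 → Fin 6 × Fin 3 := fun k =>
  (⟨(k : ℕ) / 3, by have := k.isLt; omega⟩, ⟨(k : ℕ) % 3, by have := k.isLt; omega⟩)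

/-- Natural ordering of the 18 columns of the `n = 6` focal matrix. -/
def colIdx : Fin 18 → (Fin 3 × Fin 4) ⊕ Fin 6 := fun k =>
  if h : (k : ℕ) < 12 then
    Sum.inl (⟨(k : ℕ) / 4, by omega⟩, ⟨(k : ℕ) % 4, by omega⟩)
  else Sum.inr ⟨(k : ℕ) - 12, by have := k.isLt; omega⟩

/-- The determinant of the 18×18 focal matrix `M(q,p)` for `n = 6`. -/
def focalDet (q : Fin 6 → Fin 4 → ℂ) (p : Fin 6 → Fin 3 → ℂ) : ℂ :=
  ((focalMatrix 6 q p).submatrix rowIdx colIdx).det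

theorem det_submatrix_diagonal_mul_mul_diagonal {ι m n R : Type*} [Fintype ι] [DecidableEq ι]
    [Fintype m] [DecidableEq m] [Fintype n] [DecidableEq n] [CommRing R]
    (A : Matrix m n R) (d : m → R) (e : n → R) {r : ι → m} {s : ι → n}
    (hr : r.Bijective) (hs : s.Bijective) :
    ((diagonal d * A * diagonal e).submatrix r s).det =
      (∏ i, d i) * (∏ j, e j) * (A.submatrix r s).det := by
  have hsub : (diagonal d * A * diagonal e).submatrix r s =
      diagonal (d ∘ r) * A.submatrix r s * diagonal (e ∘ s) := by
    ext k l
    simp only [submatrix_apply, mul_diagonal, diagonal_mul, Function.comp_apply]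
  rw [hsub, det_mul, det_mul, det_diagonal, det_diagonal,
    Fintype.prod_bijective r hr (d ∘ r) d fun _ => rfl,
    Fintype.prod_bijective s hs (e ∘ s) e fun _ => rfl]
  ring

theorem focalMatrix_smul {n : ℕ} (q : Fin n → Fin 4 → ℂ) (p : Fin n → Fin 3 → ℂ)
    {c : Fin n → ℂ} (c' : Fin n → ℂ) (hc : ∀ j, c j ≠ 0) :
    focalMatrix n (fun j => c j • q j) (fun j => c' j • p j) =
      diagonal (fun ji : Fin n × Fin 3 => c ji.1) * focalMatrix n q p *
        diagonal (Sum.elim (1 : Fin 3 × Fin 4 → ℂ) fun j => c' j / c j) := by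
  ext ji (ck | j)
  · simp only [focalMatrix, mul_diagonal, diagonal_mul, of_apply, Sum.elim_inl, Pi.smul_apply,
      smul_eq_mul, Pi.one_apply, mul_one]
    split_ifs <;> simp
  · simp only [focalMatrix, mul_diagonal, diagonal_mul, of_apply, Sum.elim_inr, Pi.smul_apply,
      smul_eq_mul]
    split_ifs with h
    · subst h
      field_simp [hc ji.1]
    · simp

theorem rowIdx_bijective : rowIdx.Bijective := by decide

theorem colIdx_bijective : colIdx.Bijective := by decide

theorem focalDet_smul_of_ne_zero (q : Fin 6 → Fin 4 → ℂ) (p : Fin 6 → Fin 3 → ℂ)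
    {c : Fin 6 → ℂ} (c' : Fin 6 → ℂ) (hc : ∀ j, c j ≠ 0) :
    focalDet (fun j => c j • q j) (fun j => c' j • p j) =
      (∏ j : Fin 6, c j ^ 2 * c' j) * focalDet q p := by
  have hfactor : (∏ ji : Fin 6 × Fin 3, c ji.1) *
      ∏ l : (Fin 3 × Fin 4) ⊕ Fin 6, Sum.elim 1 (fun j => c' j / c j) l =
        ∏ j : Fin 6, c j ^ 2 * c' j := by
    simp only [Fintype.prod_prod_type, Fintype.prod_sum_type, Sum.elim_inl, Sum.elim_inr,
      Pi.one_apply, Finset.prod_const_one, one_mul, Finset.prod_const, Finset.card_univ,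
      Fintype.card_fin, ← Finset.prod_mul_distrib]
    refine Finset.prod_congr rfl fun j _ => ?_
    field_simp [hc j]
  rw [focalDet, focalMatrix_smul q p c' hc, det_submatrix_diagonal_mul_mul_diagonal _ _ _
    rowIdx_bijective colIdx_bijective, hfactor, focalDet]

@[fun_prop]
theorem Continuous.focalDet {X : Type*} [TopologicalSpace X] {q : X → Fin 6 → Fin 4 → ℂ}
    {p : X → Fin 6 → Fin 3 → ℂ} (hq : Continuous q) (hp : Continuous p) :
    Continuous fun x => focalDet (q x) (p x) := by
  refine Continuous.matrix_det (continuous_matrix fun k l => ?_)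
  simp only [submatrix_apply, focalMatrix, of_apply]
  rcases colIdx l with ck | j
  · simp only [Sum.elim_inl]
    split_ifs <;> fun_prop
  · simp only [Sum.elim_inr]
    split_ifs <;> fun_prop

/-- **Multihomogeneity of the 6-focal (eq. 2.13).** For all scalars `c_j, c_j'`,
`det M(c₁q₁,…,c₆q₆; c₁′p₁,…,c₆′p₆) = (∏_j c_j²·c_j′) · det M(q; p)`: the 6-focal
determinant is multihomogeneous of degree 2 in each `q_j` and degree 1 in each
`p_j`, so its vanishing defines a multiprojective hypersurface. -/
theorem focalDet_multihomogeneous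
    (q : Fin 6 → Fin 4 → ℂ) (p : Fin 6 → Fin 3 → ℂ) (c c' : Fin 6 → ℂ) :
    focalDet (fun j => c j • q j) (fun j => c' j • p j) =
      (∏ j : Fin 6, (c j) ^ 2 * c' j) * focalDet q p := by
  have hdense : Dense {x : Fin 6 → ℂ | ∀ j, x j ≠ 0} := by
    simpa [Set.pi] using dense_pi Set.univ fun _ _ => dense_compl_singleton (0 : ℂ)
  have hlhs : Continuous fun x : Fin 6 → ℂ =>
      focalDet (fun j => x j • q j) (fun j => c' j • p j) := by
    fun_prop
  have hrhs : Continuous fun x : Fin 6 → ℂ => (∏ j : Fin 6, x j ^ 2 * c' j) * focalDet q p := by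
    fun_prop
  have hext := hlhs.ext_on hdense hrhs fun x hx => focalDet_smul_of_ne_zero q p c' hx
  exact congrFun hext c
end

section
/- Let S₀ ∈ GL₄(ℂ) satisfy S₀·E₅ = μ·E₅ for some μ ∈ ℂ, where E₅ = (1,1,1,1)ᵀ (note μ ≠ 0 since S₀ is invertible). For q₁,…,q₄ ∈ ℂ⁴ let d_i(q₁,…,q₄) be the determinant of the 4×4 matrix with columns q₁,…,q₄ in which the i-th column is replaced by E₅, and let P(q₁,…,q₄) be the 4×4 matrix product (q₁ | q₂ | q₃ | q₄)·diag(d₁(q), d₂(q), d₃(q), d₄(q)). Then P(S₀q₁, S₀q₂, S₀q₃, S₀q₄) = μ⁻¹·det(S₀)·S₀·P(q₁,…,q₄). -/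
open Matrix

/-- `d_i(q₁,…,q₄)`: the determinant of the 4×4 matrix with columns `q₁,…,q₄` in
which the `i`-th column is replaced by `E₅ = (1,1,1,1)ᵀ`. -/
def dS (q : Fin 4 → Fin 4 → ℂ) (i : Fin 4) : ℂ :=
  (Matrix.of fun r c => if c = i then (1 : ℂ) else q c r).det

/-- `P(q₁,…,q₄) = (q₁ | q₂ | q₃ | q₄) · diag(d₁(q), d₂(q), d₃(q), d₄(q))`. -/
def PmatS (q : Fin 4 → Fin 4 → ℂ) : Matrix (Fin 4) (Fin 4) ℂ :=
  Matrix.of fun r c => q c r * dS q c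

/-!
Write `Q = (q₁ | ⋯ | q₄)`, so that `P(q) = Q · diag(d(q))` and the transformed columns form
`S₀ Q`. Since `S₀ E₅ = μ E₅`, replacing the `i`-th column of `S₀ Q` by `μ E₅` gives
`S₀ · (Q with i-th column E₅)`; taking determinants, `μ · dᵢ(S₀ q) = det S₀ · dᵢ(q)`.
Invertibility of `S₀` forces `μ ≠ 0`, so `diag(d(S₀ q)) = μ⁻¹ det S₀ · diag(d(q))`.
-/

namespace Matrix

variable {n R : Type*} [Fintype n]

theorem ne_zero_of_mulVec_eq_smul [DecidableEq n] [Semiring R] {A : Matrix n n R}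
    (hA : IsUnit A) {v : n → R} (hv0 : v ≠ 0) {μ : R} (hv : A *ᵥ v = μ • v) : μ ≠ 0 := by
  rintro rfl
  rw [zero_smul, ← mulVec_zero A] at hv
  exact hv0 (mulVec_injective_of_isUnit hA hv)

theorem transpose_of_mulVec [CommSemiring R] (A : Matrix n n R) (q : n → n → R) :
    (of fun i => A *ᵥ q i)ᵀ = A * (of q)ᵀ := by
  ext r c
  simp [mul_apply, mulVec, dotProduct]

theorem mul_det_mul_updateCol_of_mulVec_eq_smul [DecidableEq n] [CommRing R]
    (A M : Matrix n n R) (j : n) {v : n → R} {μ : R} (hv : A *ᵥ v = μ • v) :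
    μ * ((A * M).updateCol j v).det = A.det * (M.updateCol j v).det := by
  rw [← det_updateCol_smul, ← hv, ← mul_updateCol, det_mul]

end Matrix

theorem dS_eq_det_updateCol (q : Fin 4 → Fin 4 → ℂ) (i : Fin 4) :
    dS q i = ((of q)ᵀ.updateCol i 1).det := by
  unfold dS
  congr 1
  ext r c
  by_cases h : c = i <;> simp [h]

theorem PmatS_eq_mul_diagonal (q : Fin 4 → Fin 4 → ℂ) :
    PmatS q = (of q)ᵀ * diagonal (dS q) := by
  ext r c
  simp [PmatS]

theorem mul_dS_mulVec {S : Matrix (Fin 4) (Fin 4) ℂ} {μ : ℂ} (hμ : S *ᵥ 1 = μ • 1)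
    (q : Fin 4 → Fin 4 → ℂ) (i : Fin 4) :
    μ * dS (fun j => S *ᵥ q j) i = S.det * dS q i := by
  rw [dS_eq_det_updateCol, dS_eq_det_updateCol, transpose_of_mulVec,
    mul_det_mul_updateCol_of_mulVec_eq_smul _ _ _ hμ]

/-- **Equivariance of the world normalization (eq. 3.11).** If `S₀ ∈ GL₄(ℂ)`
satisfies `S₀·E₅ = μ·E₅`, then
`P(S₀q₁, S₀q₂, S₀q₃, S₀q₄) = μ⁻¹·det(S₀)·S₀·P(q₁,…,q₄)`. -/
theorem PmatS_equivariance (S₀ : Matrix (Fin 4) (Fin 4) ℂ) (hS : IsUnit S₀)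
    (μ : ℂ) (hμ : S₀.mulVec (fun _ => 1) = μ • (fun _ => (1 : ℂ)))
    (q : Fin 4 → Fin 4 → ℂ) :
    PmatS (fun i => S₀.mulVec (q i)) = (μ⁻¹ * S₀.det) • (S₀ * PmatS q) := by
  have hμ0 : μ ≠ 0 := ne_zero_of_mulVec_eq_smul hS one_ne_zero hμ
  have hd : dS (fun i => S₀ *ᵥ q i) = (μ⁻¹ * S₀.det) • dS q := funext fun i => by
    rw [Pi.smul_apply, smul_eq_mul, mul_assoc, ← mul_dS_mulVec hμ, inv_mul_cancel_left₀ hμ0]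
  rw [PmatS_eq_mul_diagonal, PmatS_eq_mul_diagonal, transpose_of_mulVec, hd, diagonal_smul,
    mul_smul_comm, Matrix.mul_assoc]
end
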